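/- arXiv:0910.0378 — 5 statements merged into one kernel-verified Lean document; each statement's English description precedes it below -/
import Mathlib

section
/- For 0 < α < 1 and m > 0, define F_m : [0,∞) → ℝ by F_m(x) = (1-α) x^{α/(α-1)} for x > m^{α-1} and F_m(x) = m^α - α m x for 0 ≤ x ≤ m^{α-1}. Then F_m is Lipschitz continuous with Lipschitz constant α m. -/
open Real

/-- The Lipschitz truncation `F_m` of `x ↦ (1-α) x^{α/(α-1)}`:
`F_m(x) = (1-α)x^{α/(α-1)}` for `x > m^{α-1}` and `F_m(x) = m^α - αmx` for `0 ≤ x ≤ m^{α-1}`. -/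
noncomputable def Fm (α m x : ℝ) : ℝ :=
  if x ≤ m ^ (α - 1) then m ^ α - α * m * x else (1 - α) * x ^ (α / (α - 1))

/-!
With `c = m^{α-1}`, the linear piece has slope `-αm`, while the power piece has derivative
`-α x^{1/(α-1)}`; the two pieces agree in value and slope at `c` because `c^{1/(α-1)} = m`.
So `F_m` is differentiable on all of `ℝ` with derivative `-α (max x c)^{1/(α-1)}`, and since
`1/(α-1) < 0` this is bounded in absolute value by `α c^{1/(α-1)} = αm`.
-/

namespace Fm

variable {α m : ℝ}

lemma eq_of_le_threshold {x : ℝ} (hx : x ≤ m ^ (α - 1)) : Fm α m x = m ^ α - α * m * x :=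
  if_pos hx

lemma eq_of_threshold_le (hm : 0 < m) (hα : α ≠ 1) {x : ℝ} (hx : m ^ (α - 1) ≤ x) :
    Fm α m x = (1 - α) * x ^ (α / (α - 1)) := by
  rcases hx.lt_or_eq with hlt | rfl
  · exact if_neg hlt.not_ge
  · have hα' : α - 1 ≠ 0 := sub_ne_zero.2 hα
    have hpow : (m ^ (α - 1)) ^ (α / (α - 1)) = m ^ α := by
      rw [← rpow_mul hm.le, mul_div_cancel₀ _ hα']
    have hmul : m * m ^ (α - 1) = m ^ α := by rw [rpow_sub_one hm.ne', mul_div_cancel₀ _ hm.ne']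
    rw [eq_of_le_threshold le_rfl, hpow, mul_assoc, hmul]
    ring

lemma hasDerivWithinAt_Iic {x : ℝ} (hx : x ≤ m ^ (α - 1)) :
    HasDerivWithinAt (Fm α m) (-(α * m)) (Set.Iic (m ^ (α - 1))) x := by
  have hlin : HasDerivAt (fun y => m ^ α - α * m * y) (-(α * m)) x := by
    simpa using ((hasDerivAt_id x).const_mul (α * m)).const_sub (m ^ α)
  exact hlin.hasDerivWithinAt.congr (fun _ hy => eq_of_le_threshold hy) (eq_of_le_threshold hx)

lemma hasDerivWithinAt_Ici (hm : 0 < m) (hα : α ≠ 1) {x : ℝ} (hx : m ^ (α - 1) ≤ x) :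
    HasDerivWithinAt (Fm α m) (-α * x ^ (1 / (α - 1))) (Set.Ici (m ^ (α - 1))) x := by
  have hx0 : x ≠ 0 := ((rpow_pos_of_pos hm _).trans_le hx).ne'
  have hα' : α - 1 ≠ 0 := sub_ne_zero.2 hα
  have hpow := ((hasDerivAt_rpow_const (p := α / (α - 1)) (Or.inl hx0)).const_mul (1 - α))
  have hslope : (1 - α) * (α / (α - 1) * x ^ (α / (α - 1) - 1)) = -α * x ^ (1 / (α - 1)) := by
    have hexp : α / (α - 1) - 1 = 1 / (α - 1) := by field_simp; ring
    rw [hexp, ← mul_assoc]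
    congr 1
    field_simp
    ring
  rw [← hslope]
  exact hpow.hasDerivWithinAt.congr (fun _ hy => eq_of_threshold_le hm hα hy)
    (eq_of_threshold_le hm hα hx)

theorem hasDerivAt (hm : 0 < m) (hα : α ≠ 1) (x : ℝ) :
    HasDerivAt (Fm α m) (-α * max x (m ^ (α - 1)) ^ (1 / (α - 1))) x := by
  rcases lt_trichotomy x (m ^ (α - 1)) with hlt | rfl | hgt
  · rw [max_eq_right hlt.le, one_div, rpow_rpow_inv hm.le (sub_ne_zero.2 hα), neg_mul]
    exact (hasDerivWithinAt_Iic hlt.le).hasDerivAt (Iic_mem_nhds hlt)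
  · rw [max_self]
    have hleft : HasDerivWithinAt (Fm α m) (-α * (m ^ (α - 1)) ^ (1 / (α - 1)))
        (Set.Iic (m ^ (α - 1))) (m ^ (α - 1)) := by
      rw [one_div, rpow_rpow_inv hm.le (sub_ne_zero.2 hα), neg_mul]
      exact hasDerivWithinAt_Iic le_rfl
    refine (hleft.union (hasDerivWithinAt_Ici hm hα le_rfl)).hasDerivAt ?_
    rw [Set.Iic_union_Ici]
    exact Filter.univ_mem
  · rw [max_eq_left hgt.le]
    exact (hasDerivWithinAt_Ici hm hα hgt.le).hasDerivAt (Ici_mem_nhds hgt)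

theorem lipschitzWith (hα0 : 0 < α) (hα1 : α < 1) (hm : 0 < m) :
    LipschitzWith (α * m).toNNReal (Fm α m) := by
  refine lipschitzWith_of_nnnorm_deriv_le (fun x => (hasDerivAt hm hα1.ne x).differentiableAt)
    fun x => ?_
  set c := m ^ (α - 1)
  have hc : 0 < c := rpow_pos_of_pos hm _
  have hbound : max x c ^ (1 / (α - 1)) ≤ m :=
    calc max x c ^ (1 / (α - 1)) ≤ c ^ (1 / (α - 1)) :=
          rpow_le_rpow_of_nonpos hc (le_max_right x c)
            (div_nonpos_of_nonneg_of_nonpos zero_le_one (by linarith))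
      _ = m := by rw [one_div, rpow_rpow_inv hm.le (by linarith)]
  have hpos : 0 ≤ max x c ^ (1 / (α - 1)) :=
    (rpow_pos_of_pos (hc.trans_le (le_max_right x c)) _).le
  rw [(hasDerivAt hm hα1.ne x).deriv, ← NNReal.coe_le_coe, coe_nnnorm,
    coe_toNNReal _ (by positivity), norm_mul, norm_neg, norm_of_nonneg hα0.le,
    norm_of_nonneg hpos]
  exact mul_le_mul_of_nonneg_left hbound hα0.le

end Fm

/-- For `0 < α < 1` and `m > 0`, `F_m` is Lipschitz on `[0,∞)`
with Lipschitz constant `αm`. -/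
theorem Fm_lipschitzOnWith (α m : ℝ) (hα0 : 0 < α) (hα1 : α < 1) (hm : 0 < m) :
    LipschitzOnWith (Real.toNNReal (α * m)) (Fm α m) (Set.Ici 0) :=
  (Fm.lipschitzWith hα0 hα1 hm).lipschitzOnWith
end

section
/- Let 0 < α < 1, r ∈ ℝ, γ > αr. Then sup_{c > 0} ∫₀^∞ e^{-γt} c^α e^{α(r-c)t} dt = ((γ - αr)/(1-α))^{α-1}, attained at c = (γ - αr)/(1-α). -/
/-!
For `c > 0` the integrand is `c ^ α * exp (-(γ - α r + α c) t)`, so the integral is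
`c ^ α / (γ - α r + α c)`. Since `x ↦ x ^ α` is concave, it lies below its tangent line at
`c₀ = (γ - α r) / (1 - α)`, i.e. `c ^ α ≤ c₀ ^ (α - 1) * (α c + (1 - α) c₀)`; the choice of `c₀`
makes `(1 - α) c₀ = γ - α r`, so the right-hand side is `c₀ ^ (α - 1)` times the denominator.
-/

open MeasureTheory Real Set

lemma integral_exp_mul_const_mul_exp_Ioi {a b : ℝ} (A : ℝ) (hab : a + b < 0) :
    ∫ t in Ioi (0 : ℝ), exp (a * t) * A * exp (b * t) = A / -(a + b) := by
  have hexp (t : ℝ) : exp (a * t) * A * exp (b * t) = A * exp ((a + b) * t) := by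
    rw [mul_right_comm, ← exp_add, add_mul, mul_comm]
  simp_rw [hexp]
  rw [integral_const_mul, integral_exp_mul_Ioi hab, mul_zero, exp_zero, div_neg, neg_div,
    mul_neg, mul_one_div]

lemma integral_discounted_consumption_utility {α r γ c : ℝ} (hc : 0 < γ - α * r + α * c) :
    ∫ t in Ioi (0 : ℝ), exp (-γ * t) * c ^ α * exp (α * (r - c) * t) =
      c ^ α / (γ - α * r + α * c) := by
  rw [integral_exp_mul_const_mul_exp_Ioi _ (by linarith)]
  ring_nf

lemma rpow_le_tangent_line {α a x : ℝ} (hα0 : 0 ≤ α) (hα1 : α ≤ 1) (ha : 0 < a)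
    (hx : 0 ≤ x) : x ^ α ≤ a ^ (α - 1) * (α * x + (1 - α) * a) := by
  have amgm : x ^ α * a ^ (1 - α) ≤ α * x + (1 - α) * a :=
    geom_mean_le_arith_mean2_weighted hα0 (by linarith) hx ha.le (by ring)
  have hcancel : a ^ (α - 1) * a ^ (1 - α) = 1 := by
    rw [← rpow_add ha, sub_add_sub_cancel', sub_self, rpow_zero]
  calc x ^ α = a ^ (α - 1) * (x ^ α * a ^ (1 - α)) := by
        rw [mul_left_comm, hcancel, mul_one]
    _ ≤ a ^ (α - 1) * (α * x + (1 - α) * a) := by gcongr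

/-- For `0 < α < 1` and `γ > αr`, the supremum over `c > 0` of
`∫₀^∞ e^{-γt} c^α e^{α(r-c)t} dt` equals `((γ - αr)/(1-α))^{α-1}`, and it is attained at
`c = (γ - αr)/(1-α)`. -/
theorem optimal_constant_consumption (α r γ : ℝ)
    (hα0 : 0 < α) (hα1 : α < 1) (hγ : α * r < γ) :
    IsGreatest
      ((fun c : ℝ => ∫ t in Set.Ioi (0 : ℝ),
          Real.exp (-γ * t) * c ^ α * Real.exp (α * (r - c) * t)) '' Set.Ioi 0)
      (((γ - α * r) / (1 - α)) ^ (α - 1)) ∧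
    (∫ t in Set.Ioi (0 : ℝ),
        Real.exp (-γ * t) * ((γ - α * r) / (1 - α)) ^ α *
          Real.exp (α * (r - (γ - α * r) / (1 - α)) * t)) =
      ((γ - α * r) / (1 - α)) ^ (α - 1) := by
  set c₀ := (γ - α * r) / (1 - α)
  have hc₀ : 0 < c₀ := div_pos (by linarith) (by linarith)
  have hgap : γ - α * r = (1 - α) * c₀ := by
    rw [mul_div_cancel₀ _ (by linarith : (1 : ℝ) - α ≠ 0)]
  have hvalue : ∫ t in Ioi (0 : ℝ), exp (-γ * t) * c₀ ^ α * exp (α * (r - c₀) * t) =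
      c₀ ^ (α - 1) := by
    rw [integral_discounted_consumption_utility (by rw [hgap]; nlinarith), hgap,
      show (1 - α) * c₀ + α * c₀ = c₀ by ring, rpow_sub_one hc₀.ne']
  refine ⟨⟨⟨c₀, hc₀, hvalue⟩, ?_⟩, hvalue⟩
  rintro _ ⟨c, hc : 0 < c, rfl⟩
  have hden : 0 < γ - α * r + α * c := by positivity
  dsimp only
  rw [integral_discounted_consumption_utility hden, div_le_iff₀ hden, hgap]
  calc c ^ α ≤ c₀ ^ (α - 1) * (α * c + (1 - α) * c₀) :=
        rpow_le_tangent_line hα0.le hα1.le hc₀ hc.le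
    _ = c₀ ^ (α - 1) * ((1 - α) * c₀ + α * c) := by ring
end

section
/- Let r > 0, μ ∈ ℝ, σ > 0, α ∈ (0,1), γ ∈ ℝ, c ≥ 0, and let r_t = r·exp((μ - σ²/2)t + σW_t) be a geometric Brownian motion. Then E ∫₀^∞ e^{-γt + α∫₀ᵗ(r_s - c)ds} dt = +∞. -/
open MeasureTheory ProbabilityTheory Real Filter Topology
open scoped NNReal ENNReal

/-!
Since `e^y ≥ 1 + y` and `r_s > 0`, for `0 ≤ u ≤ v ≤ t` we have
`∫₀ᵗ r_s ds ≥ r ∫ᵤᵛ (1 + (μ - σ²/2) s + σ W_s) ds`, which is deterministic up to the Gaussian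
term `r σ ∫ᵤᵛ W_s ds`. Writing `∫ᵤᵛ W_s ds = (v - u) W_u + Z` with `Z = ∫ᵤᵛ (W_s - W_u) ds`, the
bound `e^{kZ} ≥ 1 + kZ` and the independence of `W_u` from the later increments give
`E e^{k ∫ᵤᵛ W_s ds} ≥ E e^{k (v - u) W_u} = e^{k² (v - u)² u / 2}`. On the window `(u, 2u]` this
is `e^{k² u³ / 2}`, while every other term in the exponent is at most quadratic in `u`.
Integrating `t` over `(2u, 2u + 1]` only, the value is at least `e^{p(u)}` for a cubic `p` with
positive leading coefficient, for every `u ≥ 0`.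
-/

/-- `W` is a standard one-dimensional Brownian motion on `(Ω, P)`: it starts at `0`, has
continuous paths, Gaussian increments `W_t - W_s ~ N(0, t - s)` for `0 ≤ s ≤ t`, and
independent increments. -/
def IsStandardBrownian {Ω : Type*} [MeasurableSpace Ω] (P : Measure Ω)
    (W : ℝ → Ω → ℝ) : Prop :=
  (∀ ω, W 0 ω = 0) ∧
  (∀ ω, Continuous fun t => W t ω) ∧
  (∀ t, Measurable (W t)) ∧
  (∀ s t : ℝ, 0 ≤ s → s ≤ t →
    Measure.map (fun ω => W t ω - W s ω) P = gaussianReal 0 (Real.toNNReal (t - s))) ∧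
  (∀ (n : ℕ) (u : Fin (n + 1) → ℝ), Monotone u → (∀ i, 0 ≤ u i) →
    iIndepFun (m := fun _ : Fin n => (inferInstance : MeasurableSpace ℝ))
      (fun i : Fin n => fun ω => W (u i.succ) ω - W (u i.castSucc) ω) P)

theorem ofReal_integral_le_lintegral_ofReal {α : Type*} [MeasurableSpace α]
    {μ : Measure α} (f : α → ℝ) :
    ENNReal.ofReal (∫ x, f x ∂μ) ≤ ∫⁻ x, ENNReal.ofReal (f x) ∂μ := by
  by_cases hf : Integrable f μ
  · refine ENNReal.ofReal_le_of_le_toReal ?_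
    rw [integral_eq_lintegral_pos_part_sub_lintegral_neg_part hf]
    exact sub_le_self _ ENNReal.toReal_nonneg
  · simp [integral_undef hf]

theorem tendsto_cubic_atTop {a b c d : ℝ} (ha : 0 < a) :
    Tendsto (fun x => a * x ^ 3 + b * x ^ 2 + c * x + d) atTop atTop := by
  open Polynomial in
  refine (tendsto_atTop_of_leadingCoeff_nonneg (C a * X ^ 3 + C b * X ^ 2 + C c * X + C d)
    (by rw [degree_cubic ha.ne']; norm_num) (by rw [leadingCoeff_cubic ha.ne']; exact ha.le)).congr
    fun x => ?_
  simp

theorem abs_le_exp_add_exp_neg (x : ℝ) : |x| ≤ exp x + exp (-x) :=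
  abs_le'.2 ⟨by linarith [add_one_le_exp x, exp_pos (-x)],
    by linarith [add_one_le_exp (-x), exp_pos x]⟩

section GaussianLaw

variable {Ω : Type*} [MeasurableSpace Ω] {P : Measure Ω} [IsProbabilityMeasure P]
  {X : Ω → ℝ} {v : ℝ≥0}

theorem integrable_exp_mul_of_hasLaw_gaussianReal (hX : HasLaw X (gaussianReal 0 v) P)
    (t : ℝ) : Integrable (fun ω => exp (t * X ω)) P :=
  mgf_pos_iff.1 (by rw [mgf_gaussianReal hX.map_eq]; positivity)

theorem integrable_of_hasLaw_gaussianReal (hX : HasLaw X (gaussianReal 0 v) P) :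
    Integrable X P := by
  refine ((integrable_exp_mul_of_hasLaw_gaussianReal hX 1).add
    (integrable_exp_mul_of_hasLaw_gaussianReal hX (-1))).mono'
    hX.aemeasurable.aestronglyMeasurable (ae_of_all _ fun ω => ?_)
  simpa using abs_le_exp_add_exp_neg (X ω)

theorem integral_abs_le_of_hasLaw_gaussianReal (hX : HasLaw X (gaussianReal 0 v) P) :
    ∫ ω, |X ω| ∂P ≤ 2 * exp (v / 2) := by
  have h1 := integrable_exp_mul_of_hasLaw_gaussianReal hX 1
  have h2 := integrable_exp_mul_of_hasLaw_gaussianReal hX (-1)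
  calc ∫ ω, |X ω| ∂P ≤ ∫ ω, (exp (1 * X ω) + exp (-1 * X ω)) ∂P :=
        integral_mono (integrable_of_hasLaw_gaussianReal hX).abs (h1.add h2)
          fun ω => by simpa using abs_le_exp_add_exp_neg (X ω)
    _ = 2 * exp (v / 2) := by
        rw [integral_add h1 h2, ← mgf, ← mgf, mgf_gaussianReal hX.map_eq,
          mgf_gaussianReal hX.map_eq]
        ring_nf

end GaussianLaw

theorem integral_mul_integral_eq_zero_of_indepFun {Ω T : Type*} [MeasurableSpace Ω]
    [MeasurableSpace T] {P : Measure Ω} [IsProbabilityMeasure P] {ν : Measure T}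
    [IsFiniteMeasure ν] {X : Ω → ℝ} {Y : T → Ω → ℝ} {C : ℝ}
    (hXm : Measurable X) (hX : Integrable X P) (hYm : Measurable fun p : T × Ω => Y p.1 p.2)
    (hind : ∀ᵐ s ∂ν, IndepFun X (Y s) P) (hY : ∀ᵐ s ∂ν, Integrable (Y s) P)
    (hmean : ∀ᵐ s ∂ν, ∫ ω, Y s ω ∂P = 0) (hbound : ∀ᵐ s ∂ν, ∫ ω, |Y s ω| ∂P ≤ C) :
    Integrable (fun ω => X ω * ∫ s, Y s ω ∂ν) P ∧ ∫ ω, X ω * ∫ s, Y s ω ∂ν ∂P = 0 := by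
  have hFm : Measurable fun p : Ω × T => X p.1 * Y p.2 p.1 :=
    (hXm.comp measurable_fst).mul (hYm.comp measurable_swap)
  have hF : Integrable (fun p : Ω × T => X p.1 * Y p.2 p.1) (P.prod ν) := by
    rw [integrable_prod_iff' hFm.aestronglyMeasurable]
    refine ⟨by filter_upwards [hind, hY] with s hXY hYs using hXY.integrable_mul hX hYs, ?_⟩
    refine (integrable_const ((∫ ω, |X ω| ∂P) * C)).mono'
      hFm.norm.stronglyMeasurable.integral_prod_left'.aestronglyMeasurable ?_
    filter_upwards [hind, hbound] with s hXY hs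
    have hprod : ∫ ω, |X ω| * |Y s ω| ∂P = (∫ ω, |X ω| ∂P) * ∫ ω, |Y s ω| ∂P :=
      (hXY.comp measurable_abs measurable_abs).integral_fun_mul_eq_mul_integral
        hXm.abs.aestronglyMeasurable
        (hYm.comp measurable_prodMk_left).abs.aestronglyMeasurable
    simp only [norm_mul, Real.norm_eq_abs]
    rw [abs_of_nonneg (integral_nonneg fun ω => by positivity), hprod]
    exact mul_le_mul_of_nonneg_left hs (integral_nonneg fun ω => abs_nonneg _)
  have hpull : ∀ ω, X ω * ∫ s, Y s ω ∂ν = ∫ s, X ω * Y s ω ∂ν := fun ω =>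
    (integral_const_mul _ _).symm
  simp_rw [hpull]
  refine ⟨hF.integral_prod_left, ?_⟩
  rw [integral_integral_swap hF]
  refine integral_eq_zero_of_ae ?_
  filter_upwards [hind, hmean] with s hXY hs
  rw [hXY.integral_fun_mul_eq_mul_integral hXm.aestronglyMeasurable
    (hYm.comp measurable_prodMk_left).aestronglyMeasurable]
  simp [hs]

/-- Exponent of the integrand along a path `w` of `W`, with drift `a` standing for `μ - σ²/2`. -/
noncomputable def gbmExponent (γ α c r a σ : ℝ) (w : ℝ → ℝ) (t : ℝ) : ℝ :=
  -γ * t + α * ∫ s in Set.Ioc 0 t, (r * exp (a * s + σ * w s) - c)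

theorem le_setIntegral_mul_exp {w : ℝ → ℝ} (hw : Continuous w) {r a σ u v t : ℝ}
    (hr : 0 ≤ r) (hu : 0 ≤ u) (huv : u ≤ v) (hvt : v ≤ t) :
    r * ((v - u) + a * (v ^ 2 - u ^ 2) / 2 + σ * ∫ s in Set.Ioc u v, w s) ≤
      ∫ s in Set.Ioc 0 t, r * exp (a * s + σ * w s) := by
  have hexp : Continuous fun s => r * exp (a * s + σ * w s) := by fun_prop
  calc r * ((v - u) + a * (v ^ 2 - u ^ 2) / 2 + σ * ∫ s in Set.Ioc u v, w s)
      = ∫ s in Set.Ioc u v, r * (1 + a * s + σ * w s) := by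
        simp only [← intervalIntegral.integral_of_le huv]
        rw [intervalIntegral.integral_const_mul, intervalIntegral.integral_add
          ((by fun_prop : Continuous fun s => 1 + a * s).intervalIntegrable _ _)
          ((by fun_prop : Continuous fun s => σ * w s).intervalIntegrable _ _),
          intervalIntegral.integral_add intervalIntegrable_const
          ((by fun_prop : Continuous fun s => a * s).intervalIntegrable _ _),
          intervalIntegral.integral_const_mul, intervalIntegral.integral_const_mul,
          integral_id, intervalIntegral.integral_const, smul_eq_mul]
        ring
    _ ≤ ∫ s in Set.Ioc u v, r * exp (a * s + σ * w s) :=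
        setIntegral_mono
          (by fun_prop : Continuous fun s => r * (1 + a * s + σ * w s)).integrableOn_Ioc
          hexp.integrableOn_Ioc fun s =>
            mul_le_mul_of_nonneg_left (by linarith [add_one_le_exp (a * s + σ * w s)]) hr
    _ ≤ ∫ s in Set.Ioc 0 t, r * exp (a * s + σ * w s) :=
        setIntegral_mono_set hexp.integrableOn_Ioc (ae_of_all _ fun s => by positivity)
          (Set.Ioc_subset_Ioc hu hvt).eventuallyLE

theorem le_gbmExponent {w : ℝ → ℝ} (hw : Continuous w) {α γ c r a σ u v t : ℝ} (hα : 0 ≤ α)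
    (hr : 0 ≤ r) (hu : 0 ≤ u) (huv : u ≤ v) (ht : t ∈ Set.Ioc v (v + 1)) :
    -|γ + α * c| * (v + 1) + α * r * ((v - u) + a * (v ^ 2 - u ^ 2) / 2) +
        α * r * σ * ∫ s in Set.Ioc u v, w s ≤
      gbmExponent γ α c r a σ w t := by
  have ht0 : 0 ≤ t := by linarith [ht.1]
  have hrate := mul_le_mul_of_nonneg_left
    (le_setIntegral_mul_exp (a := a) (σ := σ) hw hr hu huv ht.1.le) hα
  have hdrift : (γ + α * c) * t ≤ |γ + α * c| * (v + 1) :=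
    (mul_le_mul_of_nonneg_right (le_abs_self _) ht0).trans
      (mul_le_mul_of_nonneg_left ht.2 (abs_nonneg _))
  rw [gbmExponent,
    integral_sub (by fun_prop : Continuous fun s => r * exp (a * s + σ * w s)).integrableOn_Ioc
      continuous_const.integrableOn_Ioc,
    setIntegral_const, Real.volume_real_Ioc_of_le ht0, smul_eq_mul]
  linarith

namespace IsStandardBrownian

variable {Ω : Type*} [MeasurableSpace Ω] {P : Measure Ω} {W : ℝ → Ω → ℝ}

theorem hasLaw_sub (hW : IsStandardBrownian P W) {s t : ℝ} (hs : 0 ≤ s) (hst : s ≤ t) :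
    HasLaw (fun ω => W t ω - W s ω) (gaussianReal 0 (t - s).toNNReal) P :=
  ⟨((hW.2.2.1 t).sub (hW.2.2.1 s)).aemeasurable, hW.2.2.2.1 s t hs hst⟩

theorem hasLaw (hW : IsStandardBrownian P W) {t : ℝ} (ht : 0 ≤ t) :
    HasLaw (W t) (gaussianReal 0 t.toNNReal) P := by
  simpa [hW.1] using hW.hasLaw_sub le_rfl ht

theorem indepFun_sub (hW : IsStandardBrownian P W) {s t : ℝ} (hs : 0 ≤ s) (hst : s ≤ t) :
    IndepFun (W s) (fun ω => W t ω - W s ω) P := by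
  have hmono : Monotone ![0, s, t] := by
    rw [Fin.monotone_iff_le_succ, Fin.forall_fin_two]
    exact ⟨hs, hst⟩
  have hnonneg : ∀ i, 0 ≤ ![0, s, t] i := by
    intro i; fin_cases i <;> simp [hs, hs.trans hst]
  simpa [hW.1] using
    (hW.2.2.2.2 2 ![0, s, t] hmono hnonneg).indepFun (i := 0) (j := 1) (by decide)

theorem ofReal_exp_le_lintegral_exp_mul_setIntegral [IsProbabilityMeasure P]
    (hW : IsStandardBrownian P W) (hWm : Measurable fun p : ℝ × Ω => W p.1 p.2) {u v : ℝ}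
    (hu : 0 ≤ u) (huv : u ≤ v) (k : ℝ) :
    ENNReal.ofReal (exp (k ^ 2 * (v - u) ^ 2 * u / 2)) ≤
      ∫⁻ ω, ENNReal.ofReal (exp (k * ∫ s in Set.Ioc u v, W s ω)) ∂P := by
  have hWu : Measurable (W u) := hW.2.2.1 u
  have hpaths : ∀ ω, Continuous fun s => W s ω := hW.2.1
  have hXm : Measurable fun ω => exp (k * (v - u) * W u ω) := by fun_prop
  have hX := integrable_exp_mul_of_hasLaw_gaussianReal (hW.hasLaw hu) (k * (v - u))
  have hincr : ∀ᵐ s ∂volume.restrict (Set.Ioc u v),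
      HasLaw (fun ω => W s ω - W u ω) (gaussianReal 0 (s - u).toNNReal) P ∧
        IndepFun (W u) (fun ω => W s ω - W u ω) P ∧ (s - u).toNNReal ≤ v - u :=
    (ae_restrict_iff' measurableSet_Ioc).2 (ae_of_all _ fun s hs =>
      ⟨hW.hasLaw_sub hu hs.1.le, hW.indepFun_sub hu hs.1.le,
        by rw [Real.coe_toNNReal _ (sub_nonneg.2 hs.1.le)]; linarith [hs.2]⟩)
  obtain ⟨hXZ, hXZ0⟩ := integral_mul_integral_eq_zero_of_indepFun
    (ν := volume.restrict (Set.Ioc u v)) (Y := fun s ω => W s ω - W u ω)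
    (C := 2 * exp ((v - u) / 2)) hXm hX (hWm.sub (hWu.comp measurable_snd))
    (hincr.mono fun s h => h.2.1.comp (φ := fun x => exp (k * (v - u) * x)) (by fun_prop)
      measurable_id)
    (hincr.mono fun s h => integrable_of_hasLaw_gaussianReal h.1)
    (hincr.mono fun s h => h.1.integral_eq.trans integral_id_gaussianReal)
    (hincr.mono fun s h =>
      (integral_abs_le_of_hasLaw_gaussianReal h.1).trans (by gcongr; exact h.2.2))
  have hsplit : ∀ ω, ∫ s in Set.Ioc u v, W s ω =
      (v - u) * W u ω + ∫ s in Set.Ioc u v, (W s ω - W u ω) := by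
    intro ω
    rw [integral_sub (hpaths ω).integrableOn_Ioc continuous_const.integrableOn_Ioc,
      setIntegral_const, Real.volume_real_Ioc_of_le huv, smul_eq_mul]
    ring
  have hpath : ∀ ω, exp (k * (v - u) * W u ω) +
      k * (exp (k * (v - u) * W u ω) * ∫ s in Set.Ioc u v, (W s ω - W u ω)) ≤
        exp (k * ∫ s in Set.Ioc u v, W s ω) := by
    intro ω
    rw [hsplit, mul_add, ← mul_assoc k (v - u), exp_add]
    nlinarith [mul_le_mul_of_nonneg_left
      (add_one_le_exp (k * ∫ s in Set.Ioc u v, (W s ω - W u ω))) (exp_pos (k * (v - u) * W u ω)).le]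
  have hmgf : ∫ ω, exp (k * (v - u) * W u ω) ∂P = exp (k ^ 2 * (v - u) ^ 2 * u / 2) := by
    rw [← mgf, mgf_gaussianReal (hW.hasLaw hu).map_eq, Real.coe_toNNReal _ hu]
    ring_nf
  calc ENNReal.ofReal (exp (k ^ 2 * (v - u) ^ 2 * u / 2))
      = ENNReal.ofReal (∫ ω, (exp (k * (v - u) * W u ω) +
          k * (exp (k * (v - u) * W u ω) * ∫ s in Set.Ioc u v, (W s ω - W u ω))) ∂P) := by
        rw [integral_add hX (hXZ.const_mul k), integral_const_mul, hXZ0, hmgf, mul_zero,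
          add_zero]
    _ ≤ _ := ofReal_integral_le_lintegral_ofReal _
    _ ≤ ∫⁻ ω, ENNReal.ofReal (exp (k * ∫ s in Set.Ioc u v, W s ω)) ∂P :=
        lintegral_mono fun ω => ENNReal.ofReal_le_ofReal (hpath ω)

theorem ofReal_exp_le_lintegral_lintegral_exp_gbmExponent [IsProbabilityMeasure P]
    (hW : IsStandardBrownian P W) (hWm : Measurable fun p : ℝ × Ω => W p.1 p.2)
    {α γ c r a σ u v : ℝ} (hα : 0 ≤ α) (hr : 0 ≤ r) (hu : 0 ≤ u) (huv : u ≤ v) :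
    ENNReal.ofReal (exp (-|γ + α * c| * (v + 1) + α * r * ((v - u) + a * (v ^ 2 - u ^ 2) / 2) +
        (α * r * σ) ^ 2 * (v - u) ^ 2 * u / 2)) ≤
      ∫⁻ ω, (∫⁻ t in Set.Ioi 0, ENNReal.ofReal (exp (gbmExponent γ α c r a σ (W · ω) t))) ∂P := by
  set K := -|γ + α * c| * (v + 1) + α * r * ((v - u) + a * (v ^ 2 - u ^ 2) / 2)
  have hpath : ∀ ω, ENNReal.ofReal (exp (K + α * r * σ * ∫ s in Set.Ioc u v, W s ω)) ≤
      ∫⁻ t in Set.Ioi 0, ENNReal.ofReal (exp (gbmExponent γ α c r a σ (W · ω) t)) := by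
    intro ω
    calc ENNReal.ofReal (exp (K + α * r * σ * ∫ s in Set.Ioc u v, W s ω))
        = ∫⁻ _ in Set.Ioc v (v + 1),
            ENNReal.ofReal (exp (K + α * r * σ * ∫ s in Set.Ioc u v, W s ω)) := by
          simp [Real.volume_Ioc]
      _ ≤ ∫⁻ t in Set.Ioc v (v + 1),
            ENNReal.ofReal (exp (gbmExponent γ α c r a σ (W · ω) t)) :=
          setLIntegral_mono' measurableSet_Ioc fun t ht => ENNReal.ofReal_le_ofReal <|
            exp_le_exp.2 (le_gbmExponent (hW.2.1 ω) hα hr hu huv ht)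
      _ ≤ _ := lintegral_mono_set
          (Set.Ioc_subset_Ioi_self.trans (Set.Ioi_subset_Ioi (hu.trans huv)))
  calc ENNReal.ofReal (exp (K + (α * r * σ) ^ 2 * (v - u) ^ 2 * u / 2))
      = ENNReal.ofReal (exp K) *
          ENNReal.ofReal (exp ((α * r * σ) ^ 2 * (v - u) ^ 2 * u / 2)) := by
        rw [exp_add, ENNReal.ofReal_mul (exp_pos _).le]
    _ ≤ ENNReal.ofReal (exp K) *
          ∫⁻ ω, ENNReal.ofReal (exp (α * r * σ * ∫ s in Set.Ioc u v, W s ω)) ∂P := by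
        gcongr
        exact hW.ofReal_exp_le_lintegral_exp_mul_setIntegral hWm hu huv _
    _ = ∫⁻ ω, ENNReal.ofReal (exp (K + α * r * σ * ∫ s in Set.Ioc u v, W s ω)) ∂P := by
        rw [← lintegral_const_mul' _ _ ENNReal.ofReal_ne_top]
        simp_rw [exp_add, ENNReal.ofReal_mul (exp_pos _).le]
    _ ≤ _ := lintegral_mono hpath

end IsStandardBrownian

theorem gbm_infinite_value_general {Ω : Type*} [MeasurableSpace Ω] (P : Measure Ω)
    [IsProbabilityMeasure P] (W : ℝ → Ω → ℝ) (hW : IsStandardBrownian P W)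
    (hWmeas : Measurable fun p : ℝ × Ω => W p.1 p.2)
    (μ σ α γ c r : ℝ) (hr : 0 < r) (hσ : 0 < σ) (hα0 : 0 < α) :
    (∫⁻ ω, (∫⁻ t in Set.Ioi (0 : ℝ),
        ENNReal.ofReal (Real.exp (-γ * t +
          α * ∫ s in Set.Ioc (0 : ℝ) t,
            (r * Real.exp ((μ - σ ^ 2 / 2) * s + σ * W s ω) - c)))) ∂P) = ⊤ := by
  have hgrowth := ENNReal.tendsto_ofReal_atTop.comp <| tendsto_exp_atTop.comp <|
    tendsto_cubic_atTop (b := 3 / 2 * α * r * (μ - σ ^ 2 / 2)) (c := α * r - 2 * |γ + α * c|)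
      (d := -|γ + α * c|) (by positivity : 0 < (α * r * σ) ^ 2 / 2)
  refine top_le_iff.1 (le_of_tendsto hgrowth ((eventually_ge_atTop 0).mono fun u hu => ?_))
  refine le_of_eq_of_le ?_ (hW.ofReal_exp_le_lintegral_lintegral_exp_gbmExponent hWmeas hα0.le
    hr.le hu (by linarith : u ≤ 2 * u))
  simp only [Function.comp_apply]
  ring_nf

/-- If the short rate is a geometric Brownian motion
`r_t = r·exp((μ - σ²/2)t + σW_t)` with `r > 0`, then for any constant consumption fraction
`c ≥ 0`, `E ∫₀^∞ e^{-γt + α∫₀ᵗ(r_s - c)ds} dt = +∞`. -/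
theorem gbm_infinite_value {Ω : Type*} [MeasurableSpace Ω] (P : Measure Ω)
    [IsProbabilityMeasure P] (W : ℝ → Ω → ℝ) (hW : IsStandardBrownian P W)
    (hWmeas : Measurable fun p : ℝ × Ω => W p.1 p.2)
    (μ σ α γ c r : ℝ) (hr : 0 < r) (hσ : 0 < σ) (hα0 : 0 < α) (hα1 : α < 1)
    (hc : 0 ≤ c) :
    (∫⁻ ω, (∫⁻ t in Set.Ioi (0 : ℝ),
        ENNReal.ofReal (Real.exp (-γ * t +
          α * ∫ s in Set.Ioc (0 : ℝ) t,
            (r * Real.exp ((μ - σ ^ 2 / 2) * s + σ * W s ω) - c)))) ∂P) = ⊤ :=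
  gbm_infinite_value_general P W hW hWmeas μ σ α γ c r hr hσ hα0
end

section
/- Let 0 < α < 1, b > 0, γ real, and ρ = (1/(1-α))(γ - αa/b - α²σ²/(2(1-α)b²)) > 0, where a, σ > 0 are the Vasicek parameters. For the Vasicek process r_t = re^{-bt} + (a/b)(1-e^{-bt}) + σX_t with X_t = ∫₀ᵗ e^{-b(t-s)}dW_s, the function N(r) = E^r ∫₀^∞ e^{(1/(1-α))(-γt + α∫₀ᵗ r_s ds)} dt is finite and satisfies N(r) ≤ e^{α|r|/((1-α)b)} / ρ for all r ∈ ℝ. -/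
open MeasureTheory ProbabilityTheory Real
open scoped NNReal ENNReal

/-!
By Tonelli, `N(r) = ∫₀^∞ E[exp(c(-γt + α∫₀ᵗ r_s ds))] dt` with `c = 1/(1-α)`. For fixed `t`
the exponent is deterministic plus `cασ Yₜ`, where `Yₜ = ∫₀ᵗ X_s ds ~ N(0, vₜ)`. The
deterministic mean integrates to at most `|r|/b + (a/b)t`, and the Gaussian exponential moment
is `exp(c²α²σ²vₜ/2)` with `vₜ ≤ t/b²`. Together this gives
`E[…] ≤ exp(α|r|/((1-α)b) - ρt)`, and integrating in `t` yields `e^{α|r|/((1-α)b)}/ρ`.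
-/

open Set

lemma measurable_setIntegral_Ioc_zero {Ω : Type*} [MeasurableSpace Ω] {f : ℝ → Ω → ℝ}
    (hf : Measurable fun p : ℝ × Ω => f p.1 p.2) :
    Measurable fun p : Ω × ℝ => ∫ s in Ioc 0 p.2, f s p.1 := by
  set S : Set ((Ω × ℝ) × ℝ) := {q | q.2 ∈ Ioc 0 q.1.2}
  have hS : MeasurableSet S :=
    (measurableSet_lt measurable_const measurable_snd).inter
      (measurableSet_le measurable_snd (measurable_snd.comp measurable_fst))
  have hg : Measurable (S.indicator fun q => f q.2 q.1.1) :=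
    (hf.comp (measurable_snd.prodMk (measurable_fst.comp measurable_fst))).indicator hS
  convert (hg.stronglyMeasurable.integral_prod_right' (ν := volume)).measurable using 2 with p
  rw [← integral_indicator measurableSet_Ioc]
  rfl

lemma lintegral_ofReal_exp_sub_mul_Ioi (K : ℝ) {ρ : ℝ} (hρ : 0 < ρ) :
    ∫⁻ t in Ioi 0, ENNReal.ofReal (exp (K - ρ * t)) = ENNReal.ofReal (exp K / ρ) := by
  have hsplit : (fun t => exp (K - ρ * t)) = fun t => exp K * exp (-ρ * t) := by
    funext t; rw [← exp_add]; ring_nf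
  rw [← ofReal_integral_eq_lintegral_ofReal, hsplit, integral_const_mul,
    integral_exp_mul_Ioi (by linarith) 0]
  · simp [div_eq_mul_inv]
  · rw [hsplit]; exact (integrableOn_exp_mul_Ioi (by linarith) 0).const_mul _
  · exact ae_of_all _ fun t => (exp_pos _).le

lemma lintegral_ofReal_exp_add_mul_of_map_eq_gaussianReal {Ω : Type*} [MeasurableSpace Ω]
    {P : Measure Ω} [IsProbabilityMeasure P] {Y : Ω → ℝ} {μ : ℝ} {v : ℝ≥0}
    (hY : P.map Y = gaussianReal μ v) (m u : ℝ) :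
    ∫⁻ ω, ENNReal.ofReal (exp (m + u * Y ω)) ∂P =
      ENNReal.ofReal (exp (m + μ * u + v * u ^ 2 / 2)) := by
  have hint : Integrable (fun ω => exp (u * Y ω)) P := by
    rw [← mgf_pos_iff, mgf_gaussianReal hY]; exact exp_pos _
  simp_rw [exp_add m]
  rw [← ofReal_integral_eq_lintegral_ofReal (hint.const_mul _)
    (ae_of_all _ fun ω => by positivity), integral_const_mul, ← mgf,
    mgf_gaussianReal hY, add_assoc, exp_add m]

/-- The variance of `∫₀ᵗ X_s ds` for the Ornstein–Uhlenbeck process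
`X_t = ∫₀ᵗ e^{-b(t-s)} dW_s`. -/
noncomputable def ouIntegralVariance (b t : ℝ) : ℝ :=
  (1 / b ^ 2) * (t - 3 / (2 * b) + (2 / b) * exp (-b * t) - (1 / (2 * b)) * exp (-2 * b * t))

lemma ouIntegralVariance_le {b t : ℝ} (hb : 0 < b) (ht : 0 ≤ t) :
    ouIntegralVariance b t ≤ t / b ^ 2 := by
  have hy : exp (-b * t) ≤ 1 := exp_le_one_iff.mpr (by nlinarith)
  have hsq : exp (-2 * b * t) = exp (-b * t) ^ 2 := by rw [← exp_nat_mul]; ring_nf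
  have hgap : t / b ^ 2 - ouIntegralVariance b t =
      (1 - exp (-b * t)) * (3 - exp (-b * t)) / (2 * b ^ 3) := by
    rw [ouIntegralVariance, hsq]; field_simp; ring
  have : 0 ≤ (1 - exp (-b * t)) * (3 - exp (-b * t)) / (2 * b ^ 3) :=
    div_nonneg (mul_nonneg (by linarith) (by linarith)) (by positivity)
  linarith

lemma setIntegral_Ioc_vasicek_mean_le {a b : ℝ} (r : ℝ) (ha : 0 ≤ a) (hb : 0 < b) {t : ℝ}
    (ht : 0 ≤ t) :
    ∫ s in Ioc 0 t, (r * exp (-b * s) + a / b * (1 - exp (-b * s))) ≤ |r| / b + a / b * t := by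
  calc ∫ s in Ioc 0 t, (r * exp (-b * s) + a / b * (1 - exp (-b * s)))
      ≤ ∫ s in Ioc 0 t, (|r| * exp (-b * s) + a / b) := by
        refine setIntegral_mono_on (Continuous.integrableOn_Ioc (by fun_prop))
          (Continuous.integrableOn_Ioc (by fun_prop)) measurableSet_Ioc fun s _ => ?_
        have := mul_le_mul_of_nonneg_right (le_abs_self r) (exp_pos (-b * s)).le
        have : 0 ≤ a / b * exp (-b * s) := by positivity
        linarith
    _ = |r| * (∫ s in Ioc 0 t, exp (-b * s)) + a / b * t := by
        rw [integral_add (Continuous.integrableOn_Ioc (by fun_prop)) (Continuous.integrableOn_Ioc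
          continuous_const), integral_const_mul, setIntegral_const,
          Real.volume_real_Ioc_of_le ht, sub_zero, smul_eq_mul, mul_comm t]
    _ ≤ |r| * (∫ s in Ioi 0, exp (-b * s)) + a / b * t := by
        have hsub : ∫ s in Ioc 0 t, exp (-b * s) ≤ ∫ s in Ioi 0, exp (-b * s) :=
          setIntegral_mono_set (integrableOn_exp_mul_Ioi (neg_lt_zero.2 hb) 0)
            (ae_of_all _ fun s => (exp_pos _).le) Ioc_subset_Ioi_self.eventuallyLE
        gcongr
    _ = |r| / b + a / b * t := by
        rw [integral_exp_mul_Ioi (by linarith) 0]; field_simp; simp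

noncomputable def vasicekRho (a b σ α γ : ℝ) : ℝ :=
  (1 / (1 - α)) * (γ - α * a / b - α ^ 2 * σ ^ 2 / (2 * (1 - α) * b ^ 2))

lemma lintegral_ofReal_exp_vasicek_le {Ω : Type*} [MeasurableSpace Ω] {P : Measure Ω}
    [IsProbabilityMeasure P] {a b σ α γ t : ℝ} (r : ℝ) (ha : 0 ≤ a) (hb : 0 < b) (hα0 : 0 ≤ α)
    (hα1 : α < 1) (ht : 0 ≤ t) {X : ℝ → Ω → ℝ}
    (hX : ∀ᵐ ω ∂P, IntegrableOn (fun s => X s ω) (Ioc 0 t))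
    (hlaw : P.map (fun ω => ∫ s in Ioc 0 t, X s ω) =
      gaussianReal 0 (ouIntegralVariance b t).toNNReal) :
    ∫⁻ ω, ENNReal.ofReal (exp ((1 / (1 - α)) * (-γ * t +
        α * ∫ s in Ioc 0 t, (r * exp (-b * s) + a / b * (1 - exp (-b * s)) + σ * X s ω)))) ∂P
      ≤ ENNReal.ofReal (exp (α * |r| / ((1 - α) * b) - vasicekRho a b σ α γ * t)) := by
  set c := 1 / (1 - α)
  set A := ∫ s in Ioc 0 t, (r * exp (-b * s) + a / b * (1 - exp (-b * s)))
  have hsplit : ∀ᵐ ω ∂P, c * (-γ * t +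
      α * ∫ s in Ioc 0 t, (r * exp (-b * s) + a / b * (1 - exp (-b * s)) + σ * X s ω)) =
      c * (-γ * t + α * A) + c * α * σ * ∫ s in Ioc 0 t, X s ω := by
    filter_upwards [hX] with ω hω
    rw [integral_add (Continuous.integrableOn_Ioc (by fun_prop)) (hω.const_mul σ),
      integral_const_mul]
    ring
  rw [lintegral_congr_ae (hsplit.mono fun ω h => by rw [h]),
    lintegral_ofReal_exp_add_mul_of_map_eq_gaussianReal hlaw]
  refine ENNReal.ofReal_le_ofReal (exp_le_exp.mpr ?_)
  have hc : 0 < c := by simp only [c]; rw [one_div_pos]; linarith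
  have hA := setIntegral_Ioc_vasicek_mean_le r ha hb ht
  have hv : ((ouIntegralVariance b t).toNNReal : ℝ) ≤ t / b ^ 2 := by
    rw [Real.coe_toNNReal']; exact max_le (ouIntegralVariance_le hb ht) (by positivity)
  calc c * (-γ * t + α * A) + 0 * (c * α * σ)
        + (ouIntegralVariance b t).toNNReal * (c * α * σ) ^ 2 / 2
      ≤ c * (-γ * t + α * (|r| / b + a / b * t)) + t / b ^ 2 * (c * α * σ) ^ 2 / 2 := by
        rw [zero_mul, add_zero]; gcongr
    _ = α * |r| / ((1 - α) * b) - vasicekRho a b σ α γ * t := by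
        have : 1 - α ≠ 0 := by linarith
        simp only [c, vasicekRho]; field_simp; ring

theorem vasicek_N_bound_general {Ω : Type*} [MeasurableSpace Ω] (P : Measure Ω)
    [IsProbabilityMeasure P] (a b σ α γ : ℝ)
    (ha : 0 < a) (hb : 0 < b) (hα0 : 0 < α) (hα1 : α < 1)
    (hρ : 0 < (1 / (1 - α)) * (γ - α * a / b - α ^ 2 * σ ^ 2 / (2 * (1 - α) * b ^ 2)))
    (X : ℝ → Ω → ℝ)
    (hXmeas : Measurable fun p : ℝ × Ω => X p.1 p.2)
    (hXcont : ∀ᵐ ω ∂P, Continuous fun s => X s ω)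
    (hYlaw : ∀ t : ℝ, 0 ≤ t →
      Measure.map (fun ω => ∫ s in Set.Ioc (0 : ℝ) t, X s ω) P =
        gaussianReal 0 (Real.toNNReal ((1 / b ^ 2) *
          (t - 3 / (2 * b) + (2 / b) * Real.exp (-b * t)
            - (1 / (2 * b)) * Real.exp (-2 * b * t))))) :
    ∀ r : ℝ,
      (∫⁻ ω, (∫⁻ t in Set.Ioi (0 : ℝ),
        ENNReal.ofReal (Real.exp ((1 / (1 - α)) * (-γ * t +
          α * ∫ s in Set.Ioc (0 : ℝ) t,
            (r * Real.exp (-b * s) + (a / b) * (1 - Real.exp (-b * s)) + σ * X s ω))))) ∂P)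
      ≤ ENNReal.ofReal (Real.exp (α * |r| / ((1 - α) * b)) /
          ((1 / (1 - α)) * (γ - α * a / b - α ^ 2 * σ ^ 2 / (2 * (1 - α) * b ^ 2)))) := by
  intro r
  have hintegral := measurable_setIntegral_Ioc_zero
    (f := fun s ω => r * exp (-b * s) + a / b * (1 - exp (-b * s)) + σ * X s ω) (by fun_prop)
  rw [lintegral_lintegral_swap (by fun_prop)]
  calc _ ≤ ∫⁻ t in Ioi 0,
        ENNReal.ofReal (exp (α * |r| / ((1 - α) * b) - vasicekRho a b σ α γ * t)) :=
        setLIntegral_mono (by fun_prop) fun t ht =>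
          lintegral_ofReal_exp_vasicek_le r ha.le hb hα0.le hα1 (le_of_lt ht)
            (hXcont.mono fun ω h => h.integrableOn_Ioc) (hYlaw t (le_of_lt ht))
    _ = _ := lintegral_ofReal_exp_sub_mul_Ioi _ hρ

/-- (Vasicek model.) Let `a, b, σ > 0`, `0 < α < 1` and
`ρ = (1/(1-α))(γ - αa/b - α²σ²/(2(1-α)b²)) > 0`. Let `(X_t)` be the Ornstein–Uhlenbeck
integral process, i.e. a measurable process with continuous paths such that
`∫₀ᵗ X_s ds ~ N(0, (1/b²)(t - 3/(2b) + (2/b)e^{-bt} - (1/(2b))e^{-2bt}))` for all `t ≥ 0`.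
Then for the Vasicek short rate `r_t = re^{-bt} + (a/b)(1-e^{-bt}) + σX_t`, the quantity
`N(r) = E^r ∫₀^∞ e^{(1/(1-α))(-γt + α∫₀ᵗ r_s ds)} dt` is finite and satisfies
`N(r) ≤ e^{α|r|/((1-α)b)} / ρ` for every `r ∈ ℝ`. -/
theorem vasicek_N_bound {Ω : Type*} [MeasurableSpace Ω] (P : Measure Ω)
    [IsProbabilityMeasure P] (a b σ α γ : ℝ)
    (ha : 0 < a) (hb : 0 < b) (hσ : 0 < σ) (hα0 : 0 < α) (hα1 : α < 1)
    (hρ : 0 < (1 / (1 - α)) * (γ - α * a / b - α ^ 2 * σ ^ 2 / (2 * (1 - α) * b ^ 2)))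
    (X : ℝ → Ω → ℝ)
    (hXmeas : Measurable fun p : ℝ × Ω => X p.1 p.2)
    (hXcont : ∀ᵐ ω ∂P, Continuous fun s => X s ω)
    (hYlaw : ∀ t : ℝ, 0 ≤ t →
      Measure.map (fun ω => ∫ s in Set.Ioc (0 : ℝ) t, X s ω) P =
        gaussianReal 0 (Real.toNNReal ((1 / b ^ 2) *
          (t - 3 / (2 * b) + (2 / b) * Real.exp (-b * t)
            - (1 / (2 * b)) * Real.exp (-2 * b * t))))) :
    ∀ r : ℝ,
      (∫⁻ ω, (∫⁻ t in Set.Ioi (0 : ℝ),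
        ENNReal.ofReal (Real.exp ((1 / (1 - α)) * (-γ * t +
          α * ∫ s in Set.Ioc (0 : ℝ) t,
            (r * Real.exp (-b * s) + (a / b) * (1 - Real.exp (-b * s)) + σ * X s ω))))) ∂P)
      ≤ ENNReal.ofReal (Real.exp (α * |r| / ((1 - α) * b)) /
          ((1 / (1 - α)) * (γ - α * a / b - α ^ 2 * σ ^ 2 / (2 * (1 - α) * b ^ 2)))) :=
  vasicek_N_bound_general P a b σ α γ ha hb hα0 hα1 hρ X hXmeas hXcont hYlaw
end

section
/- Let E be the space of continuous functions φ : ℝ → ℝ with φ(r)e^{-(α/b)|r|} → 0 as |r| → ∞, normed by ‖φ‖ = sup_r |φ(r)| e^{-(α/b)|r|}, and let (r_t) be the Vasicek process dr_t = (a - br_t)dt + σdW_t with a, b, σ > 0 and 0 < α < 1. Then for P_tφ(r) = E^r[φ(r_t) e^{α∫₀ᵗ r_s ds}] one has ‖P_tφ‖ ≤ 2 e^{(α²σ²/(2b²) + αa/b) t} ‖φ‖ for all φ ∈ E and t ≥ 0. -/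
/-!
Write the short rate as `r_s = m(s) + σ X_s` with `m` deterministic. The growth bound on `φ`
gives `|φ(x)| ≤ M (e^{(α/b) x} + e^{-(α/b) x})`, so `|P_tφ(r)|` is at most `M` times two
exponential moments `E exp(±(α/b) r_t + α ∫₀ᵗ r_s ds)`. Each exponent is a constant plus the
centred Gaussian `±(ασ/b) X_t + ασ ∫₀ᵗ X_s ds`, whose variance is at most `(ασ/b)² t`: the
integrand of the variance is the square of a convex combination of `±ασ/b` and `ασ/b`. The
Gaussian moment generating function bounds each moment by
`exp((α/b)|r| + (α²σ²/(2b²) + αa/b) t)`, the constant contributing at most `(α/b)|r| + αat/b`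
because `a ≥ 0`.
-/

open MeasureTheory ProbabilityTheory Real Filter Set
open scoped NNReal

section Gaussian

variable {Ω : Type*} [MeasurableSpace Ω] {P : Measure Ω} {Z : Ω → ℝ} {μ : ℝ} {v : ℝ≥0}

lemma integrable_exp_of_map_eq_gaussianReal (h : P.map Z = gaussianReal μ v) :
    Integrable (fun ω => rexp (Z ω)) P := by
  have hZ : AEMeasurable Z P := aemeasurable_of_map_neZero (by rw [h]; infer_instance)
  have hexp : Integrable rexp (P.map Z) := by
    simpa [h] using integrable_exp_mul_gaussianReal (μ := μ) (v := v) 1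
  exact (integrable_map_measure hexp.aestronglyMeasurable hZ).mp hexp

lemma integral_exp_of_map_eq_gaussianReal (h : P.map Z = gaussianReal μ v) :
    ∫ ω, rexp (Z ω) ∂P = rexp (μ + v / 2) := by
  simpa [mgf] using mgf_gaussianReal h 1

end Gaussian

lemma integral_exp_neg_mul_Ioc {b t : ℝ} (hb : b ≠ 0) (ht : 0 ≤ t) :
    ∫ s in Ioc 0 t, rexp (-b * s) = (1 - rexp (-b * t)) / b := by
  rw [← intervalIntegral.integral_of_le ht,
    intervalIntegral.integral_comp_mul_left rexp (neg_ne_zero.mpr hb), integral_exp]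
  simp only [inv_neg, neg_mul, mul_zero, exp_zero, smul_eq_mul]
  field_simp
  ring

lemma abs_le_mul_exp_add_exp_neg {y x k M : ℝ} (hk : 0 ≤ k) (h : |y| * rexp (-k * |x|) ≤ M) :
    |y| ≤ M * (rexp (k * x) + rexp (-k * x)) := by
  have hM : 0 ≤ M := (by positivity : 0 ≤ |y| * rexp (-k * |x|)).trans h
  rw [neg_mul, exp_neg, ← div_eq_mul_inv, div_le_iff₀ (exp_pos _)] at h
  calc |y| ≤ M * rexp |k * x| := by rwa [abs_mul, abs_of_nonneg hk]
    _ ≤ M * (rexp (k * x) + rexp (-k * x)) := by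
      rw [neg_mul]
      exact mul_le_mul_of_nonneg_left (exp_abs_le _) hM

lemma abs_mul_add_mul_one_sub_le {c e q : ℝ} (hc : |c| ≤ |e|) (hq0 : 0 ≤ q) (hq1 : q ≤ 1) :
    |c * q + e * (1 - q)| ≤ |e| :=
  calc |c * q + e * (1 - q)| ≤ |c| * q + |e| * (1 - q) := by
        grw [abs_add_le, abs_mul, abs_mul, abs_of_nonneg hq0, abs_of_nonneg (sub_nonneg.mpr hq1)]
    _ ≤ |e| * q + |e| * (1 - q) := by gcongr
    _ = |e| := by ring

/-- The variance of `c X_t + d ∫₀ᵗ X_s ds` for the Ornstein–Uhlenbeck process `dX = -b X dt + dW`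
started at `0`. -/
noncomputable def ouVariance (b c d t : ℝ) : ℝ :=
  ∫ u in Ioc 0 t, (c * rexp (-b * (t - u)) + d / b * (1 - rexp (-b * (t - u)))) ^ 2

lemma ouVariance_le {b c d t : ℝ} (hb : 0 ≤ b) (ht : 0 ≤ t) (hcd : |c| ≤ |d / b|) :
    ouVariance b c d t ≤ (d / b) ^ 2 * t := by
  unfold ouVariance
  have hbound : ∀ u ∈ Ioc 0 t,
      ‖(c * rexp (-b * (t - u)) + d / b * (1 - rexp (-b * (t - u)))) ^ 2‖ ≤ (d / b) ^ 2 := by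
    intro u hu
    have hq1 : rexp (-b * (t - u)) ≤ 1 := exp_le_one_iff.mpr (by nlinarith [hu.2])
    rw [norm_pow, Real.norm_eq_abs, ← sq_abs (d / b)]
    exact pow_le_pow_left₀ (abs_nonneg _) (abs_mul_add_mul_one_sub_le hcd (exp_pos _).le hq1) 2
  have := norm_setIntegral_le_of_norm_le_const (μ := volume) measure_Ioc_lt_top hbound
  rw [Real.volume_real_Ioc_of_le ht, sub_zero] at this
  exact (le_abs_self _).trans (by simpa using this)

section Vasicek

variable {Ω : Type*} [MeasurableSpace Ω] {P : Measure Ω} {X : ℝ → Ω → ℝ} {a b σ α r t : ℝ}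

noncomputable def vasicekMean (a b r s : ℝ) : ℝ :=
  r * rexp (-b * s) + a / b * (1 - rexp (-b * s))

noncomputable def vasicekRate (a b σ r : ℝ) (X : ℝ → Ω → ℝ) (s : ℝ) (ω : Ω) : ℝ :=
  vasicekMean a b r s + σ * X s ω

lemma continuous_vasicekMean : Continuous (vasicekMean a b r) := by
  unfold vasicekMean
  fun_prop

lemma integral_vasicekMean (hb : b ≠ 0) (ht : 0 ≤ t) :
    ∫ s in Ioc 0 t, vasicekMean a b r s = (r - a / b) * ((1 - rexp (-b * t)) / b) + a / b * t := by
  have hsplit : vasicekMean a b r = fun s => (r - a / b) * rexp (-b * s) + a / b := by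
    ext s
    unfold vasicekMean
    ring
  have hexp : IntegrableOn (fun s => rexp (-b * s)) (Ioc 0 t) :=
    Continuous.integrableOn_Ioc (by fun_prop)
  rw [hsplit, integral_add (hexp.const_mul _) (integrableOn_const measure_Ioc_lt_top.ne),
    integral_const_mul, integral_exp_neg_mul_Ioc hb ht, setIntegral_const,
    Real.volume_real_Ioc_of_le ht, sub_zero, smul_eq_mul, mul_comm t]

lemma integral_vasicekRate_ae_eq (hX : ∀ᵐ ω ∂P, Continuous fun s => X s ω) :
    ∀ᵐ ω ∂P, ∫ s in Ioc 0 t, vasicekRate a b σ r X s ω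
      = (∫ s in Ioc 0 t, vasicekMean a b r s) + σ * ∫ s in Ioc 0 t, X s ω := by
  filter_upwards [hX] with ω hω
  unfold vasicekRate
  rw [← integral_const_mul]
  exact integral_add continuous_vasicekMean.integrableOn_Ioc
    ((hω.const_mul σ).integrableOn_Ioc (μ := volume))

lemma vasicek_exponent_le {ε : ℝ} (ha : 0 ≤ a) (hb : 0 < b) (hα : 0 ≤ α) (ht : 0 ≤ t)
    (hε : |ε| ≤ 1) :
    ε * (α / b) * vasicekMean a b r t + α * ∫ s in Ioc 0 t, vasicekMean a b r s
      ≤ α / b * |r| + α * a / b * t := by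
  set E := rexp (-b * t) with hE
  have hE1 : E ≤ 1 := exp_le_one_iff.mpr (by nlinarith)
  have hq : |ε * E + 1 * (1 - E)| ≤ 1 := by
    have hε' : |ε| ≤ |(1 : ℝ)| := by rwa [abs_one]
    simpa only [abs_one] using abs_mul_add_mul_one_sub_le hε' (exp_pos _).le hE1
  have hrq : r * (ε * E + 1 * (1 - E)) ≤ |r| :=
    calc _ ≤ |r| * |ε * E + 1 * (1 - E)| := (le_abs_self _).trans (abs_mul _ _).le
      _ ≤ |r| := mul_le_of_le_one_right (abs_nonneg r) hq
  have hdrift : α * a / b ^ 2 * (1 - E) * (ε - 1) ≤ 0 :=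
    mul_nonpos_of_nonneg_of_nonpos (by have := sub_nonneg.mpr hE1; positivity)
      (by linarith [(abs_le.mp hε).2])
  have hsplit : ε * (α / b) * vasicekMean a b r t + α * ∫ s in Ioc 0 t, vasicekMean a b r s
      = α / b * (r * (ε * E + 1 * (1 - E))) + α * a / b ^ 2 * (1 - E) * (ε - 1)
        + α * a / b * t := by
    rw [integral_vasicekMean hb.ne' ht, vasicekMean, ← hE]
    field_simp
    ring
  have := mul_le_mul_of_nonneg_left hrq (by positivity : 0 ≤ α / b)
  linarith

theorem integrable_exp_vasicekRate_and_integral_le {ε : ℝ} (ha : 0 ≤ a) (hb : 0 < b)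
    (hα : 0 ≤ α) (ht : 0 ≤ t) (hX : ∀ᵐ ω ∂P, Continuous fun s => X s ω)
    (hlaw : ∀ c d : ℝ, P.map (fun ω => c * X t ω + d * ∫ s in Ioc 0 t, X s ω) =
      gaussianReal 0 (ouVariance b c d t).toNNReal)
    (hε : |ε| ≤ 1) :
    Integrable (fun ω => rexp (ε * (α / b) * vasicekRate a b σ r X t ω
      + α * ∫ s in Ioc 0 t, vasicekRate a b σ r X s ω)) P ∧
    ∫ ω, rexp (ε * (α / b) * vasicekRate a b σ r X t ω
      + α * ∫ s in Ioc 0 t, vasicekRate a b σ r X s ω) ∂P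
      ≤ rexp ((α ^ 2 * σ ^ 2 / (2 * b ^ 2) + α * a / b) * t + α / b * |r|) := by
  set K := ε * (α / b) * vasicekMean a b r t + α * ∫ s in Ioc 0 t, vasicekMean a b r s with hK
  have hZ := hlaw (ε * (α * σ / b)) (α * σ)
  have hae : (fun ω => rexp (ε * (α / b) * vasicekRate a b σ r X t ω
        + α * ∫ s in Ioc 0 t, vasicekRate a b σ r X s ω))
      =ᵐ[P] fun ω => rexp K *
        rexp (ε * (α * σ / b) * X t ω + α * σ * ∫ s in Ioc 0 t, X s ω) := by
    filter_upwards [integral_vasicekRate_ae_eq hX] with ω hω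
    rw [hω, vasicekRate, ← exp_add, hK]
    ring_nf
  have hvar : ((ouVariance b (ε * (α * σ / b)) (α * σ) t).toNNReal : ℝ)
      ≤ (α * σ / b) ^ 2 * t := by
    refine Real.coe_toNNReal' _ ▸ max_le (ouVariance_le hb.le ht ?_) (by positivity)
    rw [abs_mul]
    exact mul_le_of_le_one_left (abs_nonneg _) hε
  refine ⟨((integrable_exp_of_map_eq_gaussianReal hZ).const_mul _).congr hae.symm, ?_⟩
  rw [integral_congr_ae hae, integral_const_mul, integral_exp_of_map_eq_gaussianReal hZ,
    ← exp_add, exp_le_exp]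
  have hKle : K ≤ α / b * |r| + α * a / b * t := vasicek_exponent_le ha hb hα ht hε
  have hC : α ^ 2 * σ ^ 2 / (2 * b ^ 2) = (α * σ / b) ^ 2 / 2 := by ring
  rw [hC]
  linarith

end Vasicek

theorem vasicek_semigroup_norm_bound_general {Ω : Type*} [MeasurableSpace Ω] (P : Measure Ω)
    (a b σ α : ℝ)
    (ha : 0 < a) (hb : 0 < b) (hα0 : 0 < α)
    (X : ℝ → Ω → ℝ)
    (hXcont : ∀ᵐ ω ∂P, Continuous fun s => X s ω)
    (hlaw : ∀ c d t : ℝ, 0 ≤ t →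
      Measure.map (fun ω => c * X t ω + d * ∫ s in Set.Ioc (0 : ℝ) t, X s ω) P =
        gaussianReal 0 (Real.toNNReal (∫ u in Set.Ioc (0 : ℝ) t,
          (c * Real.exp (-b * (t - u)) + (d / b) * (1 - Real.exp (-b * (t - u)))) ^ 2)))
    (φ : ℝ → ℝ)
    (t : ℝ) (ht : 0 ≤ t) (M : ℝ)
    (hM : ∀ r : ℝ, |φ r| * Real.exp (-(α / b) * |r|) ≤ M) :
    ∀ r : ℝ,
      |∫ ω, φ (r * Real.exp (-b * t) + (a / b) * (1 - Real.exp (-b * t)) + σ * X t ω) *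
          Real.exp (α * ∫ s in Set.Ioc (0 : ℝ) t,
            (r * Real.exp (-b * s) + (a / b) * (1 - Real.exp (-b * s)) + σ * X s ω)) ∂P| *
        Real.exp (-(α / b) * |r|) ≤
      2 * Real.exp ((α ^ 2 * σ ^ 2 / (2 * b ^ 2) + α * a / b) * t) * M := by
  intro r
  set C := (α ^ 2 * σ ^ 2 / (2 * b ^ 2) + α * a / b) * t
  let rate := vasicekRate a b σ r X
  let g (ε : ℝ) (ω : Ω) := rexp (ε * (α / b) * rate t ω + α * ∫ s in Ioc 0 t, rate s ω)
  have hM0 : 0 ≤ M := (by positivity : 0 ≤ |φ 0| * rexp (-(α / b) * |0|)).trans (hM 0)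
  have hg {ε : ℝ} (hε : |ε| ≤ 1) := integrable_exp_vasicekRate_and_integral_le (σ := σ)
    (r := r) ha.le hb hα0.le ht hXcont (hlaw · · t ht) hε
  obtain ⟨hint_pos, hle_pos⟩ := hg (ε := 1) (by norm_num)
  obtain ⟨hint_neg, hle_neg⟩ := hg (ε := -1) (by norm_num)
  have hdom (ω : Ω) :
      |φ (rate t ω) * rexp (α * ∫ s in Ioc 0 t, rate s ω)| ≤ M * (g 1 ω + g (-1) ω) := by
    rw [abs_mul, abs_exp]
    calc _ ≤ M * (rexp (α / b * rate t ω) + rexp (-(α / b) * rate t ω))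
          * rexp (α * ∫ s in Ioc 0 t, rate s ω) := by
          gcongr
          exact abs_le_mul_exp_add_exp_neg (div_nonneg hα0.le hb.le) (hM _)
      _ = M * (g 1 ω + g (-1) ω) := by
          simp only [g, exp_add, one_mul, neg_mul]
          ring
  have hexp : rexp (C + α / b * |r|) * rexp (-(α / b) * |r|) = rexp C := by
    rw [← exp_add]
    ring_nf
  calc _ ≤ (∫ ω, M * (g 1 ω + g (-1) ω) ∂P) * rexp (-(α / b) * |r|) := by
        gcongr
        exact abs_integral_le_integral_abs.trans <| integral_mono_of_nonneg
          (ae_of_all _ fun _ => abs_nonneg _) ((hint_pos.add hint_neg).const_mul M)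
          (ae_of_all _ hdom)
    _ = M * (∫ ω, g 1 ω ∂P + ∫ ω, g (-1) ω ∂P) * rexp (-(α / b) * |r|) := by
        rw [integral_const_mul, integral_add hint_pos hint_neg]
    _ ≤ M * (2 * rexp (C + α / b * |r|)) * rexp (-(α / b) * |r|) := by
        gcongr
        linarith
    _ = 2 * rexp C * M := by
        rw [← hexp]
        ring

/-- (Norm bound for the Feynman–Kac semigroup in the Vasicek model.)
Let `a, b, σ > 0`, `0 < α < 1`, and let `(X_t)` be the Ornstein–Uhlenbeck integral process:
a measurable process with continuous paths whose linear combinations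
`c X_t + d ∫₀ᵗ X_s ds` are centered Gaussian with variance
`∫₀ᵗ (c e^{-b(t-u)} + (d/b)(1 - e^{-b(t-u)}))² du`. Let `φ` be continuous with
`|φ(r)| e^{-(α/b)|r|} → 0` as `|r| → ∞` and `|φ(r)| e^{-(α/b)|r|} ≤ M` for all `r`.
Then, for the Vasicek short rate started at `r` and `P_tφ(r) = E^r[φ(r_t) e^{α∫₀ᵗ r_s ds}]`,
`|P_tφ(r)| e^{-(α/b)|r|} ≤ 2 e^{(α²σ²/(2b²) + αa/b)t} M` for every `r`, i.e.
`‖P_tφ‖_E ≤ 2 e^{(α²σ²/(2b²) + αa/b)t} ‖φ‖_E`. -/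
theorem vasicek_semigroup_norm_bound {Ω : Type*} [MeasurableSpace Ω] (P : Measure Ω)
    [IsProbabilityMeasure P] (a b σ α : ℝ)
    (ha : 0 < a) (hb : 0 < b) (hσ : 0 < σ) (hα0 : 0 < α) (hα1 : α < 1)
    (X : ℝ → Ω → ℝ)
    (hXmeas : Measurable fun p : ℝ × Ω => X p.1 p.2)
    (hXcont : ∀ᵐ ω ∂P, Continuous fun s => X s ω)
    (hlaw : ∀ c d t : ℝ, 0 ≤ t →
      Measure.map (fun ω => c * X t ω + d * ∫ s in Set.Ioc (0 : ℝ) t, X s ω) P =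
        gaussianReal 0 (Real.toNNReal (∫ u in Set.Ioc (0 : ℝ) t,
          (c * Real.exp (-b * (t - u)) + (d / b) * (1 - Real.exp (-b * (t - u)))) ^ 2)))
    (φ : ℝ → ℝ) (hφc : Continuous φ)
    (hφE : Tendsto (fun r : ℝ => |φ r| * Real.exp (-(α / b) * |r|)) (cocompact ℝ) (nhds 0))
    (t : ℝ) (ht : 0 ≤ t) (M : ℝ)
    (hM : ∀ r : ℝ, |φ r| * Real.exp (-(α / b) * |r|) ≤ M) :
    ∀ r : ℝ,
      |∫ ω, φ (r * Real.exp (-b * t) + (a / b) * (1 - Real.exp (-b * t)) + σ * X t ω) *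
          Real.exp (α * ∫ s in Set.Ioc (0 : ℝ) t,
            (r * Real.exp (-b * s) + (a / b) * (1 - Real.exp (-b * s)) + σ * X s ω)) ∂P| *
        Real.exp (-(α / b) * |r|) ≤
      2 * Real.exp ((α ^ 2 * σ ^ 2 / (2 * b ^ 2) + α * a / b) * t) * M :=
  vasicek_semigroup_norm_bound_general P a b σ α ha hb hα0 X hXcont hlaw φ t ht M hM
end
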